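/- The N-point DsiHT defined by the analytical formulas is a unitary linear map on ℂᴺ: it is linear in z and preserves the ℓ² norm, i.e., Σₖ |z'ₖ|² = Σₖ |zₖ|² for all z. -/

import Mathlib

open Matrix

/-- Partial energy `Eₖ²(x) = Σ_{j ≤ k} |x_j|²`. -/
noncomputable def partialEnergy {N : ℕ} (x : Fin N → ℂ) (k : Fin N) : ℝ :=
  ∑ j ∈ Finset.univ.filter (· ≤ k), ‖x j‖ ^ 2

/-- Partial cross-correlation `Eₖ(z,x) = Σ_{j ≤ k} z_j · conj(x_j)`. -/
noncomputable def partialCross {N : ℕ} (x z : Fin N → ℂ) (k : Fin N) : ℂ :=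
  ∑ j ∈ Finset.univ.filter (· ≤ k), z j * star (x j)

/-- Predecessor index. -/
def predIdx {N : ℕ} (k : Fin N) : Fin N :=
  ⟨(k : ℕ) - 1, Nat.lt_of_le_of_lt (Nat.sub_le _ _) k.isLt⟩

/-- The analytical N-point DsiHT with generator `x`, applied to `z`. -/
noncomputable def dsiht {N : ℕ} (hN : 0 < N) (x z : Fin N → ℂ) : Fin N → ℂ :=
  fun k =>
    if (k : ℕ) = 0 then
      partialCross x z ⟨N - 1, Nat.sub_lt hN one_pos⟩ /
        ((Real.sqrt (partialEnergy x ⟨N - 1, Nat.sub_lt hN one_pos⟩) : ℝ) : ℂ)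
    else
      (((partialEnergy x (predIdx k) : ℝ) : ℂ) * z k - partialCross x z (predIdx k) * x k) /
        (((Real.sqrt (partialEnergy x (predIdx k)) * Real.sqrt (partialEnergy x k)) : ℝ) : ℂ)

namespace DsihtAux

lemma filter_sum_eq {M : Type*} [AddCommMonoid M] {N : ℕ} (k : Fin N) (f : Fin N → M) :
    ∑ j ∈ Finset.univ.filter (· ≤ k), f j =
      ∑ j ∈ Finset.range ((k : ℕ) + 1), if h : j < N then f ⟨j, h⟩ else 0 := by
  rw [Finset.sum_filter]
  have h1 : (∑ i : Fin N, if i ≤ k then f i else 0) =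
      ∑ j ∈ Finset.range N,
        (fun j => if h : j < N then (if j ≤ (k : ℕ) then f ⟨j, h⟩ else 0) else 0) j := by
    rw [← Fin.sum_univ_eq_sum_range]
    refine Finset.sum_congr rfl fun i _ => ?_
    simp only [dif_pos i.isLt, Fin.eta, Fin.le_def]
  rw [h1]
  rw [← Finset.sum_subset (Finset.range_subset_range.2 k.isLt)
    (fun j _ hj => by
      have : ¬ j ≤ (k : ℕ) := fun h => hj (Finset.mem_range.2 (Nat.lt_succ_of_le h))
      simp [this])]
  refine Finset.sum_congr rfl fun j hj => ?_
  have hjk : j ≤ (k : ℕ) := Nat.lt_succ_iff.1 (Finset.mem_range.1 hj)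
  have hjN : j < N := lt_of_le_of_lt hjk k.isLt
  simp [hjN, hjk]

lemma key (a : ℝ) (u v s : ℂ) (ha : 0 < a) :
    Complex.normSq ((a : ℂ) * v - s * u) / (a * (a + Complex.normSq u)) =
      Complex.normSq v + Complex.normSq s / a -
        Complex.normSq (s + v * star u) / (a + Complex.normSq u) := by
  have hb : 0 < a + Complex.normSq u := by
    have := Complex.normSq_nonneg u; linarith
  set r : ℝ := (v * star u * star s).re with hr
  have e1 : Complex.normSq ((a : ℂ) * v - s * u) =
      a ^ 2 * Complex.normSq v + Complex.normSq s * Complex.normSq u - 2 * a * r := by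
    simp only [hr, Complex.normSq_apply, Complex.mul_re, Complex.mul_im, Complex.sub_re,
      Complex.sub_im, Complex.ofReal_re, Complex.ofReal_im, RCLike.star_def,
      Complex.conj_re, Complex.conj_im]
    ring
  have e2 : Complex.normSq (s + v * star u) =
      Complex.normSq s + Complex.normSq v * Complex.normSq u + 2 * r := by
    simp only [hr, Complex.normSq_apply, Complex.mul_re, Complex.mul_im, Complex.add_re,
      Complex.add_im, RCLike.star_def, Complex.conj_re, Complex.conj_im]
    ring
  rw [e1, e2]
  field_simp
  ring

lemma sq_norm_eq (w : ℂ) : ‖w‖ ^ 2 = Complex.normSq w := by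
  rw [Complex.sq_norm]

lemma norm_div_sqrt_mul (a b : ℝ) (ha : 0 ≤ a) (hb : 0 ≤ b) (c : ℂ) :
    ‖c / ((Real.sqrt a * Real.sqrt b : ℝ) : ℂ)‖ ^ 2 = Complex.normSq c / (a * b) := by
  rw [norm_div, div_pow, Complex.norm_real, Real.norm_eq_abs]
  rw [abs_of_nonneg (by positivity), mul_pow, Real.sq_sqrt ha, Real.sq_sqrt hb, sq_norm_eq]

lemma norm_div_sqrt (a : ℝ) (ha : 0 ≤ a) (c : ℂ) :
    ‖c / ((Real.sqrt a : ℝ) : ℂ)‖ ^ 2 = Complex.normSq c / a := by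
  rw [norm_div, div_pow, Complex.norm_real, Real.norm_eq_abs,
    abs_of_nonneg (Real.sqrt_nonneg a), Real.sq_sqrt ha, sq_norm_eq]

noncomputable def auxE {N : ℕ} (x : Fin N → ℂ) (n : ℕ) : ℝ :=
  ∑ j ∈ Finset.range (n + 1), if h : j < N then ‖x ⟨j, h⟩‖ ^ 2 else 0

noncomputable def auxS {N : ℕ} (x z : Fin N → ℂ) (n : ℕ) : ℂ :=
  ∑ j ∈ Finset.range (n + 1), if h : j < N then z ⟨j, h⟩ * star (x ⟨j, h⟩) else 0

lemma partialEnergy_eq {N : ℕ} (x : Fin N → ℂ) (k : Fin N) :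
    partialEnergy x k = auxE x (k : ℕ) := filter_sum_eq k _

lemma partialCross_eq {N : ℕ} (x z : Fin N → ℂ) (k : Fin N) :
    partialCross x z k = auxS x z (k : ℕ) := filter_sum_eq k _

lemma auxE_succ {N : ℕ} (x : Fin N → ℂ) (n : ℕ) (h : n + 1 < N) :
    auxE x (n + 1) = auxE x n + ‖x ⟨n + 1, h⟩‖ ^ 2 := by
  rw [auxE, Finset.sum_range_succ, dif_pos h]; rfl

lemma auxS_succ {N : ℕ} (x z : Fin N → ℂ) (n : ℕ) (h : n + 1 < N) :
    auxS x z (n + 1) = auxS x z n + z ⟨n + 1, h⟩ * star (x ⟨n + 1, h⟩) := by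
  rw [auxS, Finset.sum_range_succ, dif_pos h]; rfl

lemma auxE_zero {N : ℕ} (x : Fin N → ℂ) (hN : 0 < N) :
    auxE x 0 = ‖x ⟨0, hN⟩‖ ^ 2 := by
  rw [auxE, Finset.sum_range_one, dif_pos hN]

lemma auxS_zero {N : ℕ} (x z : Fin N → ℂ) (hN : 0 < N) :
    auxS x z 0 = z ⟨0, hN⟩ * star (x ⟨0, hN⟩) := by
  rw [auxS, Finset.sum_range_one, dif_pos hN]

lemma auxE_pos {N : ℕ} (x : Fin N → ℂ) (hN : 0 < N) (hx0 : 0 < ‖x ⟨0, hN⟩‖) (n : ℕ) :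
    0 < auxE x n := by
  induction n with
  | zero => rw [auxE_zero x hN]; positivity
  | succ m ih =>
      rw [auxE, Finset.sum_range_succ]
      have h2 : (0:ℝ) ≤ if h : m + 1 < N then ‖x ⟨m + 1, h⟩‖ ^ 2 else 0 := by
        split <;> positivity
      have hm : auxE x m = ∑ j ∈ Finset.range (m + 1), if h : j < N then ‖x ⟨j, h⟩‖ ^ 2 else 0 :=
        rfl
      linarith

end DsihtAux

open DsihtAux in
theorem dsiht_linear_and_norm_preserving {N : ℕ} (hN : 0 < N) (x : Fin N → ℂ)
    (hx0 : 0 < ‖x ⟨0, hN⟩‖) :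
    (∀ z w : Fin N → ℂ, dsiht hN x (z + w) = dsiht hN x z + dsiht hN x w) ∧
    (∀ (a : ℂ) (z : Fin N → ℂ), dsiht hN x (a • z) = a • dsiht hN x z) ∧
    (∀ z : Fin N → ℂ, ∑ k, ‖dsiht hN x z k‖ ^ 2 = ∑ k, ‖z k‖ ^ 2) := by
  have crossAdd : ∀ (z w : Fin N → ℂ) (k : Fin N),
      partialCross x (z + w) k = partialCross x z k + partialCross x w k := by
    intro z w k
    simp [partialCross, Finset.sum_add_distrib, add_mul]
  have crossSmul : ∀ (a : ℂ) (z : Fin N → ℂ) (k : Fin N),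
      partialCross x (a • z) k = a * partialCross x z k := by
    intro a z k
    simp [partialCross, Finset.mul_sum, mul_assoc]
  refine ⟨?_, ?_, ?_⟩
  · intro z w
    funext k
    by_cases hk : (k : ℕ) = 0
    · simp [dsiht, hk, crossAdd, add_div]
    · simp only [dsiht, if_neg hk, crossAdd, Pi.add_apply]
      rw [← add_div]
      ring_nf
  · intro a z
    funext k
    by_cases hk : (k : ℕ) = 0
    · simp [dsiht, hk, crossSmul, mul_div_assoc]
    · simp only [dsiht, if_neg hk, crossSmul, Pi.smul_apply, smul_eq_mul]
      rw [← mul_div_assoc]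
      ring_nf
  · intro z
    obtain ⟨M, rfl⟩ : ∃ M, N = M + 1 := ⟨N - 1, (Nat.succ_pred_eq_of_pos hN).symm⟩
    have Epos : ∀ n, 0 < auxE x n := auxE_pos x hN hx0
    set P : ℕ → ℝ := fun n => Complex.normSq (auxS x z n) / auxE x n with hP
    set Z : ℕ → ℝ := fun j => if h : j < M + 1 then ‖z ⟨j, h⟩‖ ^ 2 else 0 with hZ
    set G : ℕ → ℝ := fun j => if h : j < M + 1 then ‖dsiht hN x z ⟨j, h⟩‖ ^ 2 else 0 with hG
    have hL : ∑ k, ‖dsiht hN x z k‖ ^ 2 = ∑ j ∈ Finset.range (M + 1), G j := by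
      rw [← Fin.sum_univ_eq_sum_range G (M + 1)]
      refine Finset.sum_congr rfl fun k _ => ?_
      simp only [hG, dif_pos k.isLt, Fin.eta]
    have hR : ∑ k, ‖z k‖ ^ 2 = ∑ j ∈ Finset.range (M + 1), Z j := by
      rw [← Fin.sum_univ_eq_sum_range Z (M + 1)]
      refine Finset.sum_congr rfl fun k _ => ?_
      simp only [hZ, dif_pos k.isLt, Fin.eta]
    rw [hL, hR, Finset.sum_range_succ' G M, Finset.sum_range_succ' Z M]
    have hG0 : G 0 = P M := by
      simp only [hG, hP]
      rw [dif_pos (Nat.succ_pos M)]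
      show ‖dsiht hN x z ⟨0, Nat.succ_pos M⟩‖ ^ 2 = _
      rw [dsiht]
      simp only [if_pos rfl]
      rw [partialCross_eq, partialEnergy_eq]
      exact norm_div_sqrt _ (Epos _).le _
    have hZ0 : Z 0 = P 0 := by
      simp only [hZ, hP]
      rw [dif_pos (Nat.succ_pos M), auxS_zero x z hN, auxE_zero x hN]
      have hx0' : Complex.normSq (x ⟨0, hN⟩) ≠ 0 := by
        rw [← sq_norm_eq]; positivity
      have hst : Complex.normSq (star (x ⟨0, hN⟩)) = Complex.normSq (x ⟨0, hN⟩) :=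
        Complex.normSq_conj _
      rw [Complex.normSq_mul, hst, sq_norm_eq, sq_norm_eq,
        mul_div_assoc, div_self hx0', mul_one]
    have hGi : ∀ i ∈ Finset.range M, G (i + 1) = Z (i + 1) + (P i - P (i + 1)) := by
      intro i hi
      have hiM : i + 1 < M + 1 := Nat.succ_lt_succ (Finset.mem_range.1 hi)
      simp only [hG, hZ, hP]
      rw [dif_pos hiM, dif_pos hiM]
      show ‖dsiht hN x z ⟨i + 1, hiM⟩‖ ^ 2 = _
      rw [dsiht]
      simp only [if_neg (Nat.succ_ne_zero i)]
      have hpred : predIdx (⟨i + 1, hiM⟩ : Fin (M + 1)) = ⟨i, Nat.lt_of_succ_lt hiM⟩ := rfl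
      rw [hpred, partialCross_eq, partialEnergy_eq, partialEnergy_eq]
      rw [norm_div_sqrt_mul _ _ (Epos _).le (Epos _).le]
      have hE1 : auxE x (i + 1) = auxE x i + Complex.normSq (x ⟨i + 1, hiM⟩) := by
        rw [auxE_succ x i hiM, sq_norm_eq]
      have hS1 : auxS x z (i + 1) = auxS x z i + z ⟨i + 1, hiM⟩ * star (x ⟨i + 1, hiM⟩) :=
        auxS_succ x z i hiM
      rw [show ((⟨i + 1, hiM⟩ : Fin (M + 1)) : ℕ) = i + 1 from rfl,
        show ((⟨i, Nat.lt_of_succ_lt hiM⟩ : Fin (M + 1)) : ℕ) = i from rfl]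
      rw [hE1, hS1, sq_norm_eq]
      have hk := key (auxE x i) (x ⟨i + 1, hiM⟩) (z ⟨i + 1, hiM⟩) (auxS x z i) (Epos i)
      linarith
    rw [Finset.sum_congr rfl hGi, hG0, hZ0, Finset.sum_add_distrib,
      Finset.sum_range_sub' P M]
    ring
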